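/- Let ζ₁,…,ζₙ be exchangeable real random variables with partial sums S_i = ζ₁+⋯+ζ_i, S_0 = 0. Then the number of nonpositive partial sums N⁻ = Σ_{i=1}^n 1{S_i ≤ 0} and the last time of the minimum →F = max{i ≤ n : S_i = min_{0≤j≤n} S_j} have the same distribution (Sparre-Andersen identity). -/

import Mathlib

/-!
Permuting the increments does not change the law of the walk, so the laws of `N⁻` and `→F` are
the averages, over all `n!` rearrangements `x ∘ σ` of a fixed sequence `x`, of the point masses at
`N⁻(x ∘ σ)` and `→F(x ∘ σ)`. It therefore suffices to find, for each `x`, a bijection `Φ` of the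
permutations with `→F(x ∘ Φ σ) = N⁻(x ∘ σ)` (Feller's argument). For `y = x ∘ σ` let `p` be the
set of indices `j` with `S_j(y) ≤ 0`; list first the increments `y_j`, `j ∈ p`, in decreasing
order of `j`, then the others in increasing order. Sums of `y` over initial segments of `p` are
`≤ 0` and over nonempty initial segments of its complement are `> 0`, so the new walk attains its
last minimum at time `#p = N⁻(y)`. Moreover `p` is determined by the rearranged sequence (by
induction on `n`: the last index lies in `p` iff the total sum is `≤ 0`), so `Φ` is injective.
-/

open MeasureTheory Finset

theorem MeasureTheory.Measure.map_eq_map_of_exists_equiv {α β G : Type*} [MeasurableSpace α]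
    [MeasurableSpace β] [Fintype G] [Nonempty G] (ν : Measure α) (act : G → α → α)
    (hact : ∀ g, Measurable (act g)) (hinv : ∀ g, ν.map (act g) = ν) {f h : α → β}
    (hf : Measurable f) (hh : Measurable h)
    (hfh : ∀ x, ∃ e : G ≃ G, ∀ g, f (act (e g) x) = h (act g x)) :
    ν.map f = ν.map h := by
  ext s hs
  rw [Measure.map_apply hf hs, Measure.map_apply hh hs]
  have hsum : ∀ k : α → β, Measurable k → (Fintype.card G : ENNReal) * ν (k ⁻¹' s) =
      ∫⁻ x, ∑ g, s.indicator (fun _ => 1) (k (act g x)) ∂ν := by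
    intro k hk
    have hterm : ∀ g, ∫⁻ x, s.indicator (fun _ => 1) (k (act g x)) ∂ν = ν (k ⁻¹' s) := fun g => by
      have h := lintegral_indicator_const_comp (μ := ν) (hk.comp (hact g)) hs 1
      rwa [one_mul, Set.preimage_comp, ← Measure.map_apply (hact g) (hk hs), hinv] at h
    rw [lintegral_finsetSum _ fun g _ => ?meas, Finset.sum_congr rfl fun g _ => hterm g]
    · simp
    case meas => exact (measurable_const.indicator hs).comp (hk.comp (hact g))
  have hcard : (Fintype.card G : ENNReal) ≠ 0 := by simp
  rw [← ENNReal.mul_right_inj hcard (ENNReal.natCast_ne_top _), hsum f hf, hsum h hh]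
  congr 1
  funext x
  obtain ⟨e, he⟩ := hfh x
  rw [← e.sum_comp]
  simp only [he]

namespace SparreAndersen

noncomputable section

def partialSum (x : ℕ → ℝ) (i : ℕ) : ℝ := ∑ j ∈ range i, x j

def numNonpos (n : ℕ) (x : ℕ → ℝ) : ℕ := ∑ i ∈ Icc 1 n, if partialSum x i ≤ 0 then 1 else 0

def lastArgmin (n : ℕ) (x : ℕ → ℝ) : ℕ :=
  sSup {i | i ≤ n ∧ partialSum x i = sInf ((fun j => partialSum x j) '' Set.Iic n)}

/-- Zero-based like the increments: `j` records the sign of `S_{j+1}`, the partial sum ending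
with `x j`. -/
def nonposSet (n : ℕ) (x : ℕ → ℝ) : Finset ℕ := {j ∈ range n | partialSum x (j + 1) ≤ 0}

def rank (p : Finset ℕ) (j : ℕ) : ℕ := #{a ∈ p | a < j}

/-- Sends the elements of `p` (assumed `⊆ range n`), in decreasing order, to `0, …, #p - 1`, and
those of `range n \ p`, in increasing order, to `#p, …, n - 1`. -/
def reorder (n : ℕ) (p : Finset ℕ) (j : ℕ) : ℕ :=
  if j ∈ p then #p - 1 - rank p j else if j < n then #p + rank (range n \ p) j else j

lemma nonposSet_subset_range (n : ℕ) (x : ℕ → ℝ) : nonposSet n x ⊆ range n := filter_subset _ _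

lemma lastArgmin_eq_iff (n : ℕ) (x : ℕ → ℝ) (k : ℕ) :
    lastArgmin n x = k ↔ k ≤ n ∧ (∀ i ≤ n, partialSum x k ≤ partialSum x i) ∧
      (∀ i ≤ n, k < i → partialSum x k < partialSum x i) := by
  have hfin : ((fun j => partialSum x j) '' Set.Iic n).Finite := (Set.finite_Iic n).image _
  have hne : ((fun j => partialSum x j) '' Set.Iic n).Nonempty :=
    ⟨partialSum x 0, 0, Set.mem_Iic.mpr (Nat.zero_le n), rfl⟩
  set m := sInf ((fun j => partialSum x j) '' Set.Iic n)
  have hlb : ∀ i ≤ n, m ≤ partialSum x i := fun i hi =>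
    csInf_le hfin.bddBelow ⟨i, Set.mem_Iic.mpr hi, rfl⟩
  set A : Set ℕ := {i | i ≤ n ∧ partialSum x i = m}
  have hAne : A.Nonempty := by
    obtain ⟨j, hj, hjm⟩ := hne.csInf_mem hfin
    exact ⟨j, Set.mem_Iic.mp hj, hjm⟩
  have hAbdd : BddAbove A := ⟨n, fun i hi => hi.1⟩
  constructor
  · rintro rfl
    obtain ⟨hkn, hkm⟩ : lastArgmin n x ∈ A := Nat.sSup_mem hAne hAbdd
    refine ⟨hkn, fun i hi => hkm ▸ hlb i hi, fun i hi hlt => ?_⟩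
    refine hkm ▸ (hlb i hi).lt_of_ne fun h => ?_
    exact absurd (le_csSup hAbdd ⟨hi, h.symm⟩) (not_le.mpr hlt)
  · rintro ⟨hk, hmin, hlast⟩
    have hmk : m = partialSum x k := by
      refine le_antisymm (hlb k hk) (le_csInf hne ?_)
      rintro b ⟨j, hj, rfl⟩
      exact hmin j (Set.mem_Iic.mp hj)
    refine IsGreatest.csSup_eq ⟨⟨hk, hmk.symm⟩, fun i ⟨hi, him⟩ => ?_⟩
    by_contra hki
    exact (hlast i hi (not_le.mp hki)).ne (him.trans hmk).symm

lemma numNonpos_eq_card_nonposSet (n : ℕ) (x : ℕ → ℝ) : numNonpos n x = #(nonposSet n x) := by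
  rw [nonposSet, card_filter, range_eq_Ico,
    sum_Ico_add' (fun i => if partialSum x i ≤ 0 then 1 else 0), zero_add,
    Ico_add_one_right_eq_Icc, numNonpos]

lemma rank_le (p : Finset ℕ) (j : ℕ) : rank p j ≤ j := by
  simpa [rank] using card_le_card (show {a ∈ p | a < j} ⊆ range j from fun a ha => by simp_all)

lemma rank_le_card (p : Finset ℕ) (j : ℕ) : rank p j ≤ #p := card_filter_le _ _

lemma rank_lt_card {p : Finset ℕ} {j : ℕ} (hj : j ∈ p) : rank p j < #p :=
  card_lt_card ⟨filter_subset _ _, fun h => by simpa using h hj⟩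

lemma rank_lt_rank {p : Finset ℕ} {i j : ℕ} (hi : i ∈ p) (hij : i < j) : rank p i < rank p j := by
  refine card_lt_card ⟨monotone_filter_right _ fun a _ (ha : a < i) => ha.trans hij, fun h => ?_⟩
  simpa using h (mem_filter.mpr ⟨hi, hij⟩)

lemma rank_injOn (p : Finset ℕ) : Set.InjOn (rank p) p := by
  intro i hi j hj h
  rcases lt_trichotomy i j with hij | hij | hij
  · exact absurd h (rank_lt_rank hi hij).ne
  · exact hij
  · exact absurd h.symm (rank_lt_rank hj hij).ne

lemma exists_rank_eq {p : Finset ℕ} {r : ℕ} (hr : r < #p) : ∃ j ∈ p, rank p j = r := by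
  have himg : p.image (rank p) = range #p := by
    refine eq_of_subset_of_card_le (fun a ha => ?_) ?_
    · obtain ⟨j, hj, rfl⟩ := mem_image.mp ha
      exact mem_range.mpr (rank_lt_card hj)
    · rw [card_range, card_image_of_injOn (rank_injOn p)]
  have : r ∈ p.image (rank p) := himg ▸ mem_range.mpr hr
  simpa using this

lemma exists_filter_rank_lt_eq {n : ℕ} {p : Finset ℕ} (hp : p ⊆ range n) {r : ℕ} (hr : r ≤ #p) :
    ∃ J ≤ n, {j ∈ p | rank p j < r} = {j ∈ p | j < J} := by
  rcases Nat.eq_zero_or_pos r with rfl | hr0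
  · exact ⟨0, Nat.zero_le n, by simp⟩
  obtain ⟨j₀, hj₀, hrank⟩ := exists_rank_eq (show r - 1 < #p by omega)
  refine ⟨j₀ + 1, by simpa using hp hj₀, filter_congr fun j hj => ⟨fun h => ?_, fun h => ?_⟩⟩
  · by_contra hc
    have := rank_lt_rank hj₀ (show j₀ < j by omega)
    omega
  · rcases (Nat.lt_succ_iff.mp h).lt_or_eq with h' | rfl
    · have := rank_lt_rank hj h'
      omega
    · omega

lemma sum_filter_lt_add_sum_sdiff_filter_lt {M : Type*} [AddCommMonoid M] {n : ℕ}
    {p : Finset ℕ} (hp : p ⊆ range n) {J : ℕ} (hJ : J ≤ n) (f : ℕ → M) :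
    ∑ j ∈ p with j < J, f j + ∑ j ∈ range n \ p with j < J, f j = ∑ j ∈ range J, f j := by
  have hrange : {a ∈ range n | a < J} = range J := by
    ext a; simp only [mem_filter, mem_range]; omega
  rw [← sum_union (disjoint_filter_filter disjoint_sdiff), ← filter_union, union_sdiff_of_subset hp,
    hrange]

lemma rank_add_rank_sdiff {n : ℕ} {p : Finset ℕ} (hp : p ⊆ range n) {i : ℕ} (hi : i ≤ n) :
    rank p i + rank (range n \ p) i = i := by
  simpa only [rank, ← card_eq_sum_ones, card_range] using
    sum_filter_lt_add_sum_sdiff_filter_lt hp hi (fun _ => (1 : ℕ))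

lemma rank_succ (p : Finset ℕ) (i : ℕ) : rank p (i + 1) = rank p i + if i ∈ p then 1 else 0 := by
  have hsplit : {a ∈ p | a < i + 1} = {a ∈ p | a < i} ∪ {a ∈ p | a = i} := by
    ext a; simp only [mem_filter, mem_union, Nat.lt_succ_iff_lt_or_eq]; tauto
  rw [rank, rank, hsplit, card_union_of_disjoint (disjoint_filter.mpr fun _ _ h => h.ne),
    filter_eq', apply_ite card, card_singleton, card_empty]

lemma rank_of_subset_range {n : ℕ} {p : Finset ℕ} (hp : p ⊆ range n) : rank p n = #p :=
  congrArg card (filter_true_of_mem fun a ha => by simpa using hp ha)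

lemma rank_erase {p : Finset ℕ} {n j : ℕ} (hj : j ≤ n) : rank (p.erase n) j = rank p j := by
  rw [rank, rank, filter_erase, erase_eq_of_notMem (by simp; omega)]

section reorder

variable {n : ℕ} {p : Finset ℕ}

lemma card_range_sdiff (hp : p ⊆ range n) : #(range n \ p) = n - #p := by
  rw [card_sdiff_of_subset hp, card_range]

lemma reorder_lt (hp : p ⊆ range n) {j : ℕ} (hj : j < n) : reorder n p j < n := by
  have := card_range_sdiff hp
  have : #p ≤ n := by simpa using card_le_card hp
  unfold reorder
  split_ifs with hjp
  · have := rank_lt_card hjp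
    omega
  · have := rank_lt_card (show j ∈ range n \ p by simp [hj, hjp])
    omega

lemma reorder_injOn : Set.InjOn (reorder n p) (Set.Iio n) := by
  intro i (hi : i < n) j (hj : j < n) h
  unfold reorder at h
  by_cases hip : i ∈ p <;> by_cases hjp : j ∈ p <;>
    simp only [hip, hjp, hi, hj, if_true, if_false] at h
  · have := rank_lt_card hip
    have := rank_lt_card hjp
    exact rank_injOn p hip hjp (by omega)
  · have := rank_lt_card hip
    omega
  · have := rank_lt_card hjp
    omega
  · exact rank_injOn (range n \ p) (by simp [hi, hip]) (by simp [hj, hjp]) (by omega)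

lemma reorder_of_le (hp : p ⊆ range n) {j : ℕ} (hj : n ≤ j) : reorder n p j = j := by
  have hjp : j ∉ p := fun h => by simpa using (mem_range.mp (hp h)).trans_le hj
  simp [reorder, hjp, Nat.not_lt.mpr hj]

/-- `reorder n p` maps `range i` onto an interval around `#p`, extending left at each element of
`p` and right at each element of its complement. -/
lemma image_reorder_range (hp : p ⊆ range n) {i : ℕ} (hi : i ≤ n) :
    (range i).image (reorder n p) = Ico (#p - rank p i) (#p + (i - rank p i)) := by
  induction i with
  | zero => simp [rank]
  | succ i ih =>
    rw [range_add_one, image_insert, ih (by omega), rank_succ]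
    have := rank_le p i
    have := rank_le_card p i
    by_cases hip : i ∈ p
    · have := rank_lt_card hip
      rw [reorder, if_pos hip, if_pos hip]
      ext a
      simp only [mem_insert, mem_Ico]
      omega
    · have := rank_add_rank_sdiff hp (show i ≤ n by omega)
      rw [reorder, if_neg hip, if_pos (show i < n by omega), if_neg hip]
      ext a
      simp only [mem_insert, mem_Ico]
      omega

lemma partialSum_comp_reorder (hp : p ⊆ range n) (x : ℕ → ℝ) {i : ℕ} (hi : i ≤ n) :
    partialSum (x ∘ reorder n p) i = ∑ j ∈ Ico (#p - rank p i) (#p + (i - rank p i)), x j := by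
  rw [← image_reorder_range hp hi, sum_image fun a ha b hb hab =>
    reorder_injOn (Set.mem_Iio.mpr (by simp at ha; omega))
    (Set.mem_Iio.mpr (by simp at hb; omega)) hab]
  rfl

lemma filter_reorder_lt_of_le_card (hp : p ⊆ range n) {i : ℕ} (hi : i ≤ #p) :
    {j ∈ range n | reorder n p j < i} = p \ {j ∈ p | rank p j < #p - i} := by
  ext j
  simp only [mem_filter, mem_range, mem_sdiff, not_and, not_lt]
  by_cases hjp : j ∈ p
  · have := rank_lt_card hjp
    simp only [reorder, hjp, if_true, true_and, forall_const]
    have := mem_range.mp (hp hjp)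
    omega
  · simp only [reorder, hjp, if_false, false_and, iff_false, not_and]
    intro hj
    simp only [hj, if_true]
    omega

lemma filter_reorder_lt_of_card_le (hp : p ⊆ range n) {i : ℕ} (hi : #p ≤ i) :
    {j ∈ range n | reorder n p j < i} = p ∪ {j ∈ range n \ p | rank (range n \ p) j < i - #p} := by
  ext j
  simp only [mem_filter, mem_range, mem_union, mem_sdiff]
  by_cases hjp : j ∈ p
  · have := rank_lt_card hjp
    have := mem_range.mp (hp hjp)
    simp only [reorder, hjp, if_true, true_or, iff_true]
    omega
  · simp only [reorder, hjp, if_false, false_or, not_false_eq_true, and_true]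
    constructor
    · rintro ⟨hj, h⟩
      simp only [hj, if_true] at h
      omega
    · rintro ⟨hj, h⟩
      simp only [hj, if_true, true_and]
      omega

end reorder

lemma filter_lt_succ_of_notMem {s : Finset ℕ} {J : ℕ} (hJ : J ∉ s) :
    {j ∈ s | j < J + 1} = {j ∈ s | j < J} :=
  filter_congr fun _ hj => ⟨fun h => (Nat.lt_succ_iff.mp h).lt_of_ne (ne_of_mem_of_not_mem hj hJ),
    fun h => h.trans (Nat.lt_succ_self J)⟩

section nonposSet

variable (n : ℕ) (u : ℕ → ℝ)

/-- Induction on `J`: the two sums add up to `S_J`, and `J` joins `nonposSet n u` exactly when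
`S_{J+1} ≤ 0`. -/
lemma sum_nonposSet_filter_lt_nonpos_and_sum_sdiff_filter_lt_pos {J : ℕ} (hJ : J ≤ n) :
    ∑ j ∈ nonposSet n u with j < J, u j ≤ 0 ∧
      ({j ∈ range n \ nonposSet n u | j < J}.Nonempty →
        0 < ∑ j ∈ range n \ nonposSet n u with j < J, u j) := by
  induction J with
  | zero => simp
  | succ J ih =>
    obtain ⟨hA, hC⟩ := ih (by omega)
    have hsplit : _ = partialSum u (J + 1) :=
      sum_filter_lt_add_sum_sdiff_filter_lt (nonposSet_subset_range n u) hJ u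
    by_cases hJp : J ∈ nonposSet n u
    · have hS : partialSum u (J + 1) ≤ 0 := (mem_filter.mp hJp).2
      rw [filter_lt_succ_of_notMem fun h => (mem_sdiff.mp h).2 hJp] at hsplit ⊢
      have hC' : 0 ≤ ∑ j ∈ range n \ nonposSet n u with j < J, u j := by
        rcases eq_empty_or_nonempty {j ∈ range n \ nonposSet n u | j < J} with h | h
        · simp [h]
        · exact (hC h).le
      exact ⟨by linarith, hC⟩
    · have hS : 0 < partialSum u (J + 1) := by
        by_contra! h
        exact hJp (mem_filter.mpr ⟨mem_range.mpr hJ, h⟩)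
      rw [filter_lt_succ_of_notMem hJp] at hsplit ⊢
      exact ⟨hA, fun _ => by linarith⟩

lemma sum_nonposSet_filter_rank_lt_nonpos {r : ℕ} (hr : r ≤ #(nonposSet n u)) :
    ∑ j ∈ nonposSet n u with rank (nonposSet n u) j < r, u j ≤ 0 := by
  obtain ⟨J, hJ, hEq⟩ := exists_filter_rank_lt_eq (nonposSet_subset_range n u) hr
  rw [hEq]
  exact (sum_nonposSet_filter_lt_nonpos_and_sum_sdiff_filter_lt_pos n u hJ).1

lemma sum_sdiff_nonposSet_filter_rank_lt_pos {r : ℕ} (hr0 : 0 < r)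
    (hr : r ≤ #(range n \ nonposSet n u)) :
    0 < ∑ j ∈ range n \ nonposSet n u with rank (range n \ nonposSet n u) j < r, u j := by
  obtain ⟨J, hJ, hEq⟩ := exists_filter_rank_lt_eq sdiff_subset hr
  obtain ⟨j₀, hj₀, hrank⟩ := exists_rank_eq (show 0 < #(range n \ nonposSet n u) by omega)
  rw [hEq]
  refine (sum_nonposSet_filter_lt_nonpos_and_sum_sdiff_filter_lt_pos n u hJ).2 ?_
  exact hEq ▸ ⟨j₀, mem_filter.mpr ⟨hj₀, hrank ▸ hr0⟩⟩

/-- `hy` says that `y = u ∘ (reorder n p)⁻¹` for `p = nonposSet n u`. Between times `i` and `#p`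
the increments of `y` are those of an initial segment of `p` if `i ≤ #p`, and of a nonempty initial
segment of its complement if `i > #p`. -/
lemma lastArgmin_eq_card_nonposSet {y : ℕ → ℝ}
    (hy : ∀ i ≤ n, partialSum y i = ∑ j ∈ range n with reorder n (nonposSet n u) j < i, u j) :
    lastArgmin n y = #(nonposSet n u) := by
  set p := nonposSet n u
  have hp : p ⊆ range n := nonposSet_subset_range n u
  have hkn : #p ≤ n := by simpa using card_le_card hp
  have hyk : partialSum y #p = ∑ j ∈ p, u j := by
    rw [hy _ hkn, filter_reorder_lt_of_le_card hp le_rfl]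
    simp
  have hlow : ∀ i ≤ #p, partialSum y #p ≤ partialSum y i := fun i hi => by
    rw [hy i (hi.trans hkn), filter_reorder_lt_of_le_card hp hi,
      sum_sdiff_eq_sub (filter_subset _ _), hyk]
    linarith [sum_nonposSet_filter_rank_lt_nonpos n u (show #p - i ≤ #p by omega)]
  have hhigh : ∀ i ≤ n, #p < i → partialSum y #p < partialSum y i := fun i hi hpi => by
    rw [hy i hi, filter_reorder_lt_of_card_le hp hpi.le,
      sum_union (disjoint_sdiff.mono_right (filter_subset _ _)), hyk]
    linarith [sum_sdiff_nonposSet_filter_rank_lt_pos n u (show 0 < i - #p by omega)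
      (by rw [card_range_sdiff hp]; omega)]
  refine (lastArgmin_eq_iff n y _).mpr ⟨hkn, fun i hi => ?_, hhigh⟩
  rcases le_or_gt i #p with hip | hip
  · exact hlow i hip
  · exact (hhigh i hi hip).le

end nonposSet

/-- The equation `nonposSet n (x ∘ reorder n p) = p` with the partial sums of `x ∘ reorder n p`
computed (see `nonposSet_comp_reorder_eq_iff`), in a form that allows induction on `n`. -/
def SelfConsistent (n : ℕ) (x : ℕ → ℝ) (p : Finset ℕ) : Prop :=
  ∀ j < n, (∑ i ∈ Ico (#p - rank p (j + 1)) (#p + (j + 1 - rank p (j + 1))), x i ≤ 0 ↔ j ∈ p)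

lemma nonposSet_comp_reorder_eq_iff {n : ℕ} {p : Finset ℕ} (hp : p ⊆ range n) (x : ℕ → ℝ) :
    nonposSet n (x ∘ reorder n p) = p ↔ SelfConsistent n x p := by
  have hsum : ∀ j < n, partialSum (x ∘ reorder n p) (j + 1) =
      ∑ i ∈ Ico (#p - rank p (j + 1)) (#p + (j + 1 - rank p (j + 1))), x i :=
    fun j hj => partialSum_comp_reorder hp x hj
  constructor
  · intro h j hj
    have hmem : j ∈ nonposSet n (x ∘ reorder n p) ↔ partialSum (x ∘ reorder n p) (j + 1) ≤ 0 := by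
      simp [nonposSet, hj]
    rw [← hsum j hj, ← hmem, h]
  · intro h
    ext j
    simp only [nonposSet, mem_filter, mem_range]
    constructor
    · rintro ⟨hj, hle⟩
      exact (h j hj).mp (hsum j hj ▸ hle)
    · intro hjp
      have hj := mem_range.mp (hp hjp)
      exact ⟨hj, hsum j hj ▸ (h j hj).mpr hjp⟩

namespace SelfConsistent

variable {n : ℕ} {x : ℕ → ℝ} {p : Finset ℕ}

lemma mem_iff_sum_range_nonpos (hp : p ⊆ range (n + 1)) (h : SelfConsistent (n + 1) x p) :
    n ∈ p ↔ ∑ i ∈ range (n + 1), x i ≤ 0 := by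
  have hcard : #p ≤ n + 1 := by simpa using card_le_card hp
  have hlast := h n n.lt_succ_self
  rwa [rank_of_subset_range hp, Nat.sub_self, show #p + (n + 1 - #p) = n + 1 by omega,
    ← range_eq_Ico, iff_comm] at hlast

lemma erase (hn : n ∈ p) (h : SelfConsistent (n + 1) x p) :
    SelfConsistent n (fun i => x (i + 1)) (p.erase n) := by
  intro j hj
  have hrank : rank p (j + 1) < #p :=
    card_lt_card ⟨filter_subset _ _, fun hsub => absurd (mem_filter.mp (hsub hn)).2 (by omega)⟩
  rw [card_erase_of_mem hn, rank_erase (by omega), mem_erase, ← h j (by omega), sum_Ico_add',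
    and_iff_right (by omega)]
  congr! 2
  congr 1 <;> omega

theorem unique : ∀ {n : ℕ} {x : ℕ → ℝ} {p q : Finset ℕ}, p ⊆ range n → q ⊆ range n →
    SelfConsistent n x p → SelfConsistent n x q → p = q
  | 0, _, _, _, hp, hq, _, _ => by simp_all
  | n + 1, x, p, q, hp, hq, hxp, hxq => by
    have hp' : p ⊆ insert n (range n) := range_add_one ▸ hp
    have hq' : q ⊆ insert n (range n) := range_add_one ▸ hq
    by_cases hS : ∑ i ∈ range (n + 1), x i ≤ 0
    · have hnp := (hxp.mem_iff_sum_range_nonpos hp).mpr hS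
      have hnq := (hxq.mem_iff_sum_range_nonpos hq).mpr hS
      rw [← insert_erase hnp, ← insert_erase hnq, unique (subset_insert_iff.mp hp')
        (subset_insert_iff.mp hq') (hxp.erase hnp) (hxq.erase hnq)]
    · have hnp := mt (hxp.mem_iff_sum_range_nonpos hp).mp hS
      have hnq := mt (hxq.mem_iff_sum_range_nonpos hq).mp hS
      exact unique ((subset_insert_iff_of_notMem hnp).mp hp')
        ((subset_insert_iff_of_notMem hnq).mp hq')
        (fun j hj => hxp j (by omega)) (fun j hj => hxq j (by omega))

end SelfConsistent

open Equiv

def permNat (n : ℕ) : Perm (Fin n) →* Perm ℕ := Perm.extendDomainHom Fin.equivSubtype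

lemma permNat_apply_of_le (n : ℕ) (σ : Perm (Fin n)) {i : ℕ} (h : n ≤ i) : permNat n σ i = i :=
  Perm.extendDomain_apply_not_subtype _ _ (not_lt.mpr h)

lemma permNat_apply_of_lt (n : ℕ) (σ : Perm (Fin n)) {i : ℕ} (h : i < n) :
    permNat n σ i = σ ⟨i, h⟩ := by
  show σ.extendDomain Fin.equivSubtype i = _
  simpa [Fin.equivSubtype] using Perm.extendDomain_apply_subtype σ Fin.equivSubtype h

section reorderPerm

variable {n : ℕ} {p : Finset ℕ}

def reorderPerm (n : ℕ) (p : Finset ℕ) (hp : p ⊆ range n) : Perm (Fin n) :=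
  Equiv.ofBijective (fun j => ⟨reorder n p j, reorder_lt hp j.2⟩) <|
    Finite.injective_iff_bijective.mp fun a b h =>
      Fin.ext (reorder_injOn a.2 b.2 (Fin.val_eq_of_eq h))

lemma coe_permNat_reorderPerm (hp : p ⊆ range n) :
    ⇑(permNat n (reorderPerm n p hp)) = reorder n p := by
  funext m
  rcases lt_or_ge m n with h | h
  · rw [permNat_apply_of_lt n _ h]
    rfl
  · rw [permNat_apply_of_le n _ h, reorder_of_le hp h]

lemma partialSum_comp_inv (hp : p ⊆ range n) {σ : Perm ℕ} (hσ : ⇑σ = reorder n p) (u : ℕ → ℝ)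
    {i : ℕ} (hi : i ≤ n) :
    partialSum (u ∘ ⇑σ⁻¹) i = ∑ j ∈ range n with reorder n p j < i, u j := by
  have himg : (range i).image ⇑σ⁻¹ = {j ∈ range n | reorder n p j < i} := by
    ext j
    simp only [mem_image, mem_filter, mem_range]
    constructor
    · rintro ⟨m, hm, rfl⟩
      have hσm : reorder n p (σ⁻¹ m) = m := by simp [← hσ]
      refine ⟨?_, by rwa [hσm]⟩
      by_contra! hle
      rw [reorder_of_le hp hle] at hσm
      omega
    · rintro ⟨-, hj⟩
      exact ⟨reorder n p j, hj, by simp [← hσ]⟩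
  rw [partialSum, ← himg, sum_image σ⁻¹.injective.injOn]
  rfl

end reorderPerm

/-- Feller's bijection: rearrange the increments of `w ∘ permNat n σ` by `reorder n p`, where
`p` is its set of nonpositive partial sums. -/
def rearrange (n : ℕ) (w : ℕ → ℝ) (σ : Perm (Fin n)) : Perm (Fin n) :=
  σ * (reorderPerm n (nonposSet n (w ∘ permNat n σ)) (nonposSet_subset_range _ _))⁻¹

lemma lastArgmin_rearrange (n : ℕ) (w : ℕ → ℝ) (σ : Perm (Fin n)) :
    lastArgmin n (w ∘ permNat n (rearrange n w σ)) = numNonpos n (w ∘ permNat n σ) := by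
  set τ := reorderPerm n (nonposSet n (w ∘ permNat n σ)) (nonposSet_subset_range _ _)
  have hcomp : w ∘ permNat n (rearrange n w σ) = (w ∘ permNat n σ) ∘ ⇑(permNat n τ)⁻¹ := by
    rw [rearrange, map_mul, map_inv, Perm.coe_mul]
    rfl
  rw [hcomp, numNonpos_eq_card_nonposSet]
  exact lastArgmin_eq_card_nonposSet n _ fun i hi =>
    partialSum_comp_inv (nonposSet_subset_range _ _) (coe_permNat_reorderPerm _) _ hi

lemma rearrange_injective (n : ℕ) (w : ℕ → ℝ) : Function.Injective (rearrange n w) := by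
  have hσ : ∀ σ, rearrange n w σ * reorderPerm n (nonposSet n (w ∘ permNat n σ))
      (nonposSet_subset_range _ _) = σ := fun σ => inv_mul_cancel_right _ _
  have hcons : ∀ σ, SelfConsistent n (w ∘ permNat n (rearrange n w σ))
      (nonposSet n (w ∘ permNat n σ)) := fun σ => by
    rw [← nonposSet_comp_reorder_eq_iff (nonposSet_subset_range _ _),
      ← coe_permNat_reorderPerm (nonposSet_subset_range _ _), Function.comp_assoc, ← Perm.coe_mul,
      ← map_mul, hσ]
  intro σ₁ σ₂ h
  have hP := SelfConsistent.unique (nonposSet_subset_range _ _) (nonposSet_subset_range _ _)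
    (hcons σ₁) (h ▸ hcons σ₂)
  rw [← hσ σ₁, ← hσ σ₂, h]
  simp only [hP]

lemma exists_equiv_lastArgmin_eq_numNonpos (n : ℕ) (w : ℕ → ℝ) :
    ∃ e : Perm (Fin n) ≃ Perm (Fin n),
      ∀ σ, lastArgmin n (w ∘ permNat n (e σ)) = numNonpos n (w ∘ permNat n σ) :=
  ⟨Equiv.ofBijective _ (Finite.injective_iff_bijective.mp (rearrange_injective n w)),
    lastArgmin_rearrange n w⟩

lemma measurable_partialSum (i : ℕ) : Measurable fun x : ℕ → ℝ => partialSum x i :=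
  Finset.measurable_sum _ fun j _ => measurable_pi_apply j

lemma measurable_numNonpos (n : ℕ) : Measurable (numNonpos n) :=
  Finset.measurable_sum _ fun i _ =>
    Measurable.ite (measurableSet_le (measurable_partialSum i) measurable_const) measurable_const
      measurable_const

lemma measurable_lastArgmin (n : ℕ) : Measurable (lastArgmin n) := by
  refine measurable_to_countable' fun k => ?_
  have hle : ∀ i, Measurable fun x => partialSum x k ≤ partialSum x i := fun i =>
    measurableSet_setOfPred.mp <|
      measurableSet_le (measurable_partialSum k) (measurable_partialSum i)
  have hlt : ∀ i, Measurable fun x => partialSum x k < partialSum x i := fun i =>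
    measurableSet_setOfPred.mp <|
      measurableSet_lt (measurable_partialSum k) (measurable_partialSum i)
  simp_rw [Set.preimage, Set.mem_singleton_iff, lastArgmin_eq_iff]
  exact measurableSet_setOfPred.mpr (by fun_prop)

end

end SparreAndersen

open SparreAndersen

theorem stmt_6_general {Ω : Type*} [MeasurableSpace Ω] (μ : Measure Ω)
    (n : ℕ) (ζ : ℕ → Ω → ℝ)
    (hmeas : ∀ i, Measurable (ζ i))
    (hexch : ∀ π : Equiv.Perm ℕ, (∀ i, n ≤ i → π i = i) →
      μ.map (fun ω => fun i : ℕ => ζ (π i) ω) = μ.map (fun ω => fun i : ℕ => ζ i ω))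
    (S : ℕ → Ω → ℝ) (hS : ∀ i ω, S i ω = ∑ j ∈ Finset.range i, ζ j ω)
    (Nminus F : Ω → ℕ)
    (hNminus : ∀ ω, Nminus ω = ∑ i ∈ Finset.Icc 1 n, if S i ω ≤ 0 then 1 else 0)
    (hF : ∀ ω, F ω = sSup {i | i ≤ n ∧ S i ω = sInf ((fun j => S j ω) '' Set.Iic n)}) :
    μ.map Nminus = μ.map F := by
  set X : Ω → ℕ → ℝ := fun ω i => ζ i ω
  have hX : Measurable X := measurable_pi_lambda _ hmeas
  have hSX : ∀ ω, (S · ω) = partialSum (X ω) := fun ω => funext fun i => hS i ω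
  have hN : Nminus = numNonpos n ∘ X := funext fun ω => by
    simp only [hNminus, Function.comp, numNonpos, ← hSX]
  have hF' : F = lastArgmin n ∘ X := funext fun ω => by
    simp only [hF, Function.comp, lastArgmin, ← hSX]
  have hact : ∀ σ, Measurable fun x : ℕ → ℝ => x ∘ permNat n σ := fun σ =>
    measurable_pi_lambda _ fun i => measurable_pi_apply _
  rw [hN, hF', ← Measure.map_map (measurable_numNonpos n) hX,
    ← Measure.map_map (measurable_lastArgmin n) hX]
  refine (Measure.map_eq_map_of_exists_equiv _ _ hact (fun σ => ?_) (measurable_lastArgmin n)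
    (measurable_numNonpos n) (exists_equiv_lastArgmin_eq_numNonpos n)).symm
  rw [Measure.map_map (hact σ) hX]
  exact hexch _ fun i hi => permNat_apply_of_le n σ hi

/-- Sparre-Andersen identity for exchangeable increments: the number of nonpositive
partial sums equals in law the last time of the minimum of the walk. -/
theorem stmt_6 {Ω : Type*} [MeasurableSpace Ω] (μ : Measure Ω) [IsProbabilityMeasure μ]
    (n : ℕ) (ζ : ℕ → Ω → ℝ)
    (hmeas : ∀ i, Measurable (ζ i))
    (hexch : ∀ π : Equiv.Perm ℕ, (∀ i, n ≤ i → π i = i) →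
      μ.map (fun ω => fun i : ℕ => ζ (π i) ω) = μ.map (fun ω => fun i : ℕ => ζ i ω))
    (S : ℕ → Ω → ℝ) (hS : ∀ i ω, S i ω = ∑ j ∈ Finset.range i, ζ j ω)
    (Nminus F : Ω → ℕ)
    (hNminus : ∀ ω, Nminus ω = ∑ i ∈ Finset.Icc 1 n, if S i ω ≤ 0 then 1 else 0)
    (hF : ∀ ω, F ω = sSup {i | i ≤ n ∧ S i ω = sInf ((fun j => S j ω) '' Set.Iic n)}) :
    μ.map Nminus = μ.map F :=
  stmt_6_general μ n ζ hmeas hexch S hS Nminus F hNminus hF
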